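/- For fixed height bound m ≥ 1, define the polynomials P_m(x,t) by P_0 = 1, P_1 = 1 − x, and P_m = (1 − x − x²(t−1))P_{m−1} − (x² + x³(t−1))P_{m−2} for m ≥ 2. Then Σ_{n≥0} Σ_{μ ∈ M_n^m} t^{asc(μ)} x^n = P_m(x,t)/P_{m+1}(x,t) as formal power series. -/

import Mathlib

/-!
Write `F_m` for the series, `T_m` for the Motzkin paths `U r` of height at most `m` weighted by
`t^asc(U r) x^|r|`, and `G_m` for those `q` weighted by `t^asc(U q) x^|q|`. Splitting off the
first step, and splitting `U r` at its first return to the axis as `U q D r'` (where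
`asc (U q D r') = asc (U q) + asc r'`), gives
`F_m = 1 + x (F_m + T_m)`, `G_m = t + x (t F_m + T_m)`, `T_{m+1} = x G_m F_{m+1}`, `T_0 = 0`.
Eliminating `T` and `G` yields `F_{m+1} ((1 - x - x²(t-1)) - (x² + x³(t-1)) F_m) = 1`, which is
exactly the recurrence of `P` read as `F_{m+1} P_{m+2} = P_{m+1}` once `F_m P_{m+1} = P_m`.
-/

inductive Step : Type
  | U | F | D
  deriving DecidableEq

instance : Fintype Step :=
  ⟨⟨{Step.U, Step.F, Step.D}, by decide⟩, fun x => by cases x <;> decide⟩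

def stepVal : Step → ℤ
  | .U => 1
  | .F => 0
  | .D => -1

/-- Height of the path after the first `i` steps. -/
def ht (p : List Step) (i : ℕ) : ℤ := ((p.take i).map stepVal).sum

/-- A Motzkin path: starts and ends at height 0 and stays nonnegative. -/
def IsMotzkin (p : List Step) : Prop :=
  ht p p.length = 0 ∧ ∀ i ≤ p.length, 0 ≤ ht p i

instance : DecidablePred IsMotzkin := fun p => by
  unfold IsMotzkin; infer_instance

/-- Number of ascents: maximal runs of up steps (counted at their last up step). -/
def asc (p : List Step) : ℕ :=
  ((List.range p.length).filter
    (fun i => p[i]? == some Step.U && p[i+1]? != some Step.U)).length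

/-- Number of occurrences of `w` as a consecutive subword of `p`. -/
def countSubword (w p : List Step) : ℕ :=
  ((List.range p.length).filter (fun i => w.isPrefixOf (p.drop i))).length

/-- Number of plateaus: occurrences of a subword U F^k D for some k ≥ 0. -/
def plt (p : List Step) : ℕ :=
  ((List.range p.length).filter (fun i =>
    (List.range p.length).any (fun k =>
      (Step.U :: (List.replicate k Step.F ++ [Step.D])).isPrefixOf (p.drop i)))).length
open PowerSeries Polynomial

/-- The generating function for Motzkin paths of height bounded by m,
by length (x) and number of ascents (t). -/
noncomputable def FascBdd (m : ℕ) : PowerSeries (Polynomial ℚ) :=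
  PowerSeries.mk fun n =>
    ∑ f : Fin n → Step,
      if IsMotzkin (List.ofFn f) ∧ ∀ i ≤ n, ht (List.ofFn f) i ≤ (m : ℤ) then
        (Polynomial.X : Polynomial ℚ) ^ asc (List.ofFn f)
      else 0

@[simp] lemma ht_zero (p : List Step) : ht p 0 = 0 := by simp [ht]

@[simp] lemma ht_length (p : List Step) : ht p p.length = (p.map stepVal).sum := by simp [ht]

@[simp] lemma ht_cons_succ (s : Step) (p : List Step) (i : ℕ) :
    ht (s :: p) (i + 1) = stepVal s + ht p i := by
  simp [ht]

def StaysIn (S : Set ℤ) (c : ℤ) (p : List Step) : Prop :=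
  ∀ i ≤ p.length, c + ht p i ∈ S

section StaysIn

variable {S : Set ℤ} {c : ℤ}

lemma StaysIn.start_mem {p : List Step} (h : StaysIn S c p) : c ∈ S := by
  simpa using h 0 (Nat.zero_le _)

lemma StaysIn.add_sum_mem {p : List Step} (h : StaysIn S c p) : c + (p.map stepVal).sum ∈ S := by
  simpa using h p.length le_rfl

lemma StaysIn.mono {T : Set ℤ} {p : List Step} (h : StaysIn S c p) (hST : S ⊆ T) :
    StaysIn T c p :=
  fun i hi => hST (h i hi)

@[simp] lemma staysIn_nil : StaysIn S c [] ↔ c ∈ S := by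
  simp [StaysIn]

@[simp] lemma staysIn_cons (s : Step) (p : List Step) :
    StaysIn S c (s :: p) ↔ c ∈ S ∧ StaysIn S (c + stepVal s) p := by
  constructor
  · intro h
    exact ⟨h.start_mem, fun i hi => by simpa [add_assoc] using h (i + 1) (by simpa using hi)⟩
  · rintro ⟨h0, h⟩ (_ | i) hi
    · simpa using h0
    · simpa [add_assoc] using h i (by simpa using hi)

lemma staysIn_append (a b : List Step) :
    StaysIn S c (a ++ b) ↔ StaysIn S c a ∧ StaysIn S (c + (a.map stepVal).sum) b := by
  induction a generalizing c with
  | nil => simpa using fun h : StaysIn S c b => h.start_mem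
  | cons s a ih => simp [ih, add_assoc, and_assoc]

end StaysIn

lemma isMotzkin_iff {p : List Step} :
    IsMotzkin p ↔ (p.map stepVal).sum = 0 ∧ StaysIn (Set.Ici 0) 0 p := by
  simp [IsMotzkin, StaysIn]

lemma IsMotzkin.not_isMotzkin_append_D_cons {q : List Step} (hq : IsMotzkin q) (x : List Step) :
    ¬ IsMotzkin (q ++ .D :: x) := by
  intro hqx
  rw [isMotzkin_iff] at hq hqx
  have := ((staysIn_append _ _).mp hqx.2).2
  simp only [staysIn_cons, hq.1, stepVal] at this
  exact absurd this.2.start_mem (by simp)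

lemma eq_of_append_D_cons_eq {q q' r r' : List Step} (hq : IsMotzkin q) (hq' : IsMotzkin q')
    (h : q ++ .D :: r = q' ++ .D :: r') : q = q' ∧ r = r' := by
  rcases List.append_eq_append_iff.mp h with ⟨a, rfl, ha⟩ | ⟨a, rfl, ha⟩
  · cases a with
    | nil => simpa using ha
    | cons b a =>
      obtain ⟨rfl, -⟩ := List.cons_eq_cons.mp ha
      exact absurd hq' (hq.not_isMotzkin_append_D_cons a)
  · cases a with
    | nil => simpa using ha.symm
    | cons b a =>
      obtain ⟨rfl, -⟩ := List.cons_eq_cons.mp ha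
      exact absurd hq (hq'.not_isMotzkin_append_D_cons a)

lemma exists_eq_append_D_cons_of_not_staysIn {c : ℤ} (hc : 0 ≤ c) {s : List Step}
    (hs : ¬ StaysIn (Set.Ici 0) c s) :
    ∃ q r, StaysIn (Set.Ici 0) c q ∧ c + (q.map stepVal).sum = 0 ∧ s = q ++ .D :: r := by
  induction s generalizing c with
  | nil => simp_all
  | cons a s ih =>
    rw [staysIn_cons] at hs
    by_cases ha : 0 ≤ c + stepVal a
    · obtain ⟨q, r, hq, hq0, rfl⟩ := ih ha (by simpa [hc] using hs)
      exact ⟨a :: q, r, by simp [hc, hq], by simpa [add_assoc] using hq0, rfl⟩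
    · have hca : c = 0 ∧ a = .D := by
        cases a <;> simp only [stepVal, reduceCtorEq, and_false, and_true] at ha ⊢ <;> omega
      obtain ⟨rfl, rfl⟩ := hca
      exact ⟨[], s, by simp, by simp, rfl⟩

lemma IsMotzkin.exists_eq_U_cons_append_D_cons {s : List Step} (h : IsMotzkin (.U :: s)) :
    ∃ q r, IsMotzkin q ∧ s = q ++ .D :: r := by
  obtain ⟨hsum, -⟩ := isMotzkin_iff.mp h
  have hs : ¬ StaysIn (Set.Ici 0) 0 s := fun hs => by
    have := hs.add_sum_mem
    simp [stepVal] at hsum this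
    omega
  obtain ⟨q, r, hq, hq0, rfl⟩ := exists_eq_append_D_cons_of_not_staysIn le_rfl hs
  exact ⟨q, r, isMotzkin_iff.mpr ⟨by simpa using hq0, hq⟩, rfl⟩

lemma IsMotzkin.getLast?_ne_U {q : List Step} (hq : IsMotzkin q) : q.getLast? ≠ some .U := by
  intro h
  obtain ⟨l, rfl⟩ := List.getLast?_eq_some_iff.mp h
  obtain ⟨hsum, hstays⟩ := isMotzkin_iff.mp hq
  have := ((staysIn_append _ _).mp hstays).2.start_mem
  simp [stepVal] at hsum this
  omega

lemma asc_nil : asc [] = 0 := rfl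

lemma asc_cons (s : Step) (p : List Step) :
    asc (s :: p) = (if s = .U ∧ p.head? ≠ some .U then 1 else 0) + asc p := by
  simp only [asc, ← List.countP_eq_length_filter, List.length_cons, List.range_succ_eq_map,
    List.countP_cons, List.countP_map]
  rw [add_comm]
  congr 1
  rcases p with _ | ⟨a, q⟩ <;> cases s <;> (try cases a) <;> simp

lemma asc_append_D_cons {q : List Step} (hq : q.getLast? ≠ some .U) (r : List Step) :
    asc (q ++ .D :: r) = asc q + asc r := by
  induction q with
  | nil => simp [asc_cons, asc_nil]
  | cons s q ih =>
    cases q with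
    | nil =>
      have hs : s ≠ .U := by simpa using hq
      simp [asc_cons, asc_nil, hs]
    | cons b q =>
      rw [List.getLast?_cons_cons] at hq
      simp only [List.cons_append, asc_cons] at ih ⊢
      rw [ih hq]
      split_ifs <;> first | omega | contradiction

lemma asc_U_cons_append_D_cons {q : List Step} (hq : IsMotzkin q) (r : List Step) :
    asc (.U :: (q ++ .D :: r)) = asc (.U :: q) + asc r := by
  rw [asc_cons, asc_cons, asc_append_D_cons hq.getLast?_ne_U]
  cases q <;> simp <;> omega

def IsBoundedMotzkin (m : ℕ) (p : List Step) : Prop :=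
  (p.map stepVal).sum = 0 ∧ StaysIn (Set.Icc 0 m) 0 p

instance (m : ℕ) : DecidablePred (IsBoundedMotzkin m) := fun p => by
  unfold IsBoundedMotzkin StaysIn; simp only [Set.mem_Icc]; infer_instance

section IsBoundedMotzkin

variable {m : ℕ}

lemma isMotzkin_and_forall_ht_le_iff {p : List Step} :
    (IsMotzkin p ∧ ∀ i ≤ p.length, ht p i ≤ m) ↔ IsBoundedMotzkin m p := by
  simp only [IsMotzkin, IsBoundedMotzkin, StaysIn, ht_length, zero_add, Set.mem_Icc]
  constructor
  · rintro ⟨⟨h0, hnn⟩, hle⟩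
    exact ⟨h0, fun i hi => ⟨hnn i hi, hle i hi⟩⟩
  · rintro ⟨h0, h⟩
    exact ⟨⟨h0, fun i hi => (h i hi).1⟩, fun i hi => (h i hi).2⟩

lemma IsBoundedMotzkin.isMotzkin {p : List Step} (h : IsBoundedMotzkin m p) : IsMotzkin p :=
  isMotzkin_iff.mpr ⟨h.1, h.2.mono Set.Icc_subset_Ici_self⟩

lemma isBoundedMotzkin_nil : IsBoundedMotzkin m [] := by
  simp [IsBoundedMotzkin]

lemma isBoundedMotzkin_F_cons {p : List Step} :
    IsBoundedMotzkin m (.F :: p) ↔ IsBoundedMotzkin m p := by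
  simp [IsBoundedMotzkin, stepVal]

lemma not_isBoundedMotzkin_D_cons {p : List Step} : ¬ IsBoundedMotzkin m (.D :: p) := by
  simp only [IsBoundedMotzkin, staysIn_cons, stepVal]
  exact fun h => absurd h.2.2.start_mem (by simp)

lemma not_isBoundedMotzkin_zero_U_cons {p : List Step} : ¬ IsBoundedMotzkin 0 (.U :: p) := by
  simp only [IsBoundedMotzkin, staysIn_cons, stepVal]
  exact fun h => absurd h.2.2.start_mem (by simp)

/-- First-return decomposition: the part of the path before its first return to the axis
lives one level higher. -/
lemma isBoundedMotzkin_U_cons_append_D_cons_iff {q r : List Step} (hq : IsMotzkin q) :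
    IsBoundedMotzkin (m + 1) (.U :: (q ++ .D :: r)) ↔
      IsBoundedMotzkin m q ∧ IsBoundedMotzkin (m + 1) r := by
  obtain ⟨hsum, hnn⟩ := isMotzkin_iff.mp hq
  have hlift : StaysIn (Set.Icc 0 ((m : ℤ) + 1)) 1 q ↔ StaysIn (Set.Icc 0 m) 0 q := by
    refine forall₂_congr fun i hi => ?_
    have := hnn i hi
    simp only [Set.mem_Icc, Set.mem_Ici] at this ⊢
    omega
  simp only [IsBoundedMotzkin, staysIn_cons, staysIn_append, List.map_cons, List.map_append,
    List.sum_cons, List.sum_append, hsum, stepVal]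
  simp [hlift]
  tauto

end IsBoundedMotzkin

def pathsOfLength (n : ℕ) : Finset (List Step) :=
  Finset.univ.image (List.ofFn (n := n))

@[simp] lemma mem_pathsOfLength {n : ℕ} {p : List Step} :
    p ∈ pathsOfLength n ↔ p.length = n := by
  constructor
  · intro h
    obtain ⟨f, -, rfl⟩ := Finset.mem_image.mp h
    simp
  · rintro rfl
    exact Finset.mem_image.mpr ⟨p.get, Finset.mem_univ _, List.ofFn_get p⟩

lemma pathsOfLength_zero : pathsOfLength 0 = {[]} := by
  ext p
  simp

lemma sum_univ_step {M : Type*} [AddCommMonoid M] (f : Step → M) :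
    ∑ s, f s = f .U + f .F + f .D := by
  simp [Finset.univ, Fintype.elems, add_assoc]

lemma sum_pathsOfLength_succ {M : Type*} [AddCommMonoid M] (f : List Step → M) (n : ℕ) :
    ∑ p ∈ pathsOfLength (n + 1), f p = ∑ s, ∑ r ∈ pathsOfLength n, f (s :: r) := by
  simp only [pathsOfLength, Finset.sum_image fun _ _ _ _ h => List.ofFn_injective h,
    List.ofFn_succ]
  rw [← (Fin.consEquiv fun _ => Step).sum_comp, Fintype.sum_prod_type]
  simp

noncomputable def pathGF (A : List Step → Prop) [DecidablePred A] (w : List Step → ℕ) :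
    PowerSeries ℚ[X] :=
  PowerSeries.mk fun n =>
    ∑ p ∈ pathsOfLength n, if A p then (Polynomial.X : ℚ[X]) ^ w p else 0

section pathGF

variable (A : List Step → Prop) [DecidablePred A] (w : List Step → ℕ)

lemma coeff_pathGF (n : ℕ) :
    PowerSeries.coeff n (pathGF A w) =
      ∑ p ∈ pathsOfLength n, if A p then (Polynomial.X : ℚ[X]) ^ w p else 0 :=
  PowerSeries.coeff_mk _ _

variable {A w} in
lemma pathGF_congr {B : List Step → Prop} [DecidablePred B] {v : List Step → ℕ}
    (hAB : ∀ p, A p ↔ B p) (hwv : ∀ p, B p → w p = v p) : pathGF A w = pathGF B v := by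
  ext n : 1
  rw [coeff_pathGF, coeff_pathGF]
  refine Finset.sum_congr rfl fun p _ => ?_
  by_cases h : B p <;> simp [h, hAB, hwv]

variable {A} in
lemma pathGF_eq_zero (h : ∀ p, ¬ A p) : pathGF A w = 0 := by
  ext n : 1
  simp [coeff_pathGF, h]

lemma pathGF_add_one : pathGF A (fun p => w p + 1) = PowerSeries.C Polynomial.X * pathGF A w := by
  ext n : 1
  simp only [PowerSeries.coeff_C_mul, coeff_pathGF, Finset.mul_sum, mul_ite, mul_zero, pow_succ']

lemma pathGF_eq_C_add_X_mul_sum :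
    pathGF A w = PowerSeries.C (if A [] then Polynomial.X ^ w [] else 0) +
      PowerSeries.X * ∑ s, pathGF (fun r => A (s :: r)) (fun r => w (s :: r)) := by
  ext n : 1
  cases n with
  | zero => simp [coeff_pathGF, pathsOfLength_zero]
  | succ n =>
    simp [coeff_pathGF, sum_pathsOfLength_succ, map_sum]

lemma coeff_pathGF_mul (B : List Step → Prop) [DecidablePred B] (v : List Step → ℕ)
    (n : ℕ) :
    PowerSeries.coeff n (pathGF A w * pathGF B v) =
      ∑ x ∈ ((Finset.HasAntidiagonal.antidiagonal n).sigma fun ab =>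
          pathsOfLength ab.1 ×ˢ pathsOfLength ab.2).filter (fun x => A x.2.1 ∧ B x.2.2),
        (Polynomial.X : ℚ[X]) ^ (w x.2.1 + v x.2.2) := by
  rw [PowerSeries.coeff_mul, Finset.sum_filter, Finset.sum_sigma]
  refine Finset.sum_congr rfl fun ab _ => ?_
  rw [coeff_pathGF, coeff_pathGF, Finset.sum_mul_sum, ← Finset.sum_product']
  refine Finset.sum_congr rfl fun x _ => ?_
  by_cases hA : A x.1 <;> by_cases hB : B x.2 <;> simp [hA, hB, pow_add]

end pathGF

lemma FascBdd_eq_pathGF (m : ℕ) : FascBdd m = pathGF (IsBoundedMotzkin m) asc := by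
  ext n : 1
  rw [coeff_pathGF, pathsOfLength, Finset.sum_image fun _ _ _ _ h => List.ofFn_injective h,
    FascBdd, PowerSeries.coeff_mk]
  simp only [← isMotzkin_and_forall_ht_le_iff, List.length_ofFn]

noncomputable def FascBddUp (m : ℕ) : PowerSeries ℚ[X] :=
  pathGF (fun r => IsBoundedMotzkin m (.U :: r)) (fun r => asc (.U :: r))

noncomputable def FascBddLift (m : ℕ) : PowerSeries ℚ[X] :=
  pathGF (IsBoundedMotzkin m) (fun q => asc (.U :: q))

lemma FascBdd_eq (m : ℕ) :
    FascBdd m = 1 + PowerSeries.X * (FascBdd m + FascBddUp m) := by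
  have hF : pathGF (fun r => IsBoundedMotzkin m (.F :: r)) (fun r => asc (.F :: r)) =
      pathGF (IsBoundedMotzkin m) asc :=
    pathGF_congr (fun _ => isBoundedMotzkin_F_cons) fun r _ => by simp [asc_cons]
  have hD : pathGF (fun r => IsBoundedMotzkin m (.D :: r)) (fun r => asc (.D :: r)) = 0 :=
    pathGF_eq_zero _ fun _ => not_isBoundedMotzkin_D_cons
  rw [FascBdd_eq_pathGF]
  conv_lhs => rw [pathGF_eq_C_add_X_mul_sum]
  rw [sum_univ_step, hF, hD, if_pos isBoundedMotzkin_nil, asc_nil, FascBddUp]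
  simp [add_comm]

lemma FascBddLift_eq (m : ℕ) :
    FascBddLift m = PowerSeries.C Polynomial.X +
      PowerSeries.X * (PowerSeries.C Polynomial.X * FascBdd m + FascBddUp m) := by
  have hU : pathGF (fun r => IsBoundedMotzkin m (.U :: r)) (fun r => asc (.U :: .U :: r)) =
      FascBddUp m :=
    pathGF_congr (fun _ => Iff.rfl) fun r _ => by simp [asc_cons]
  have hF : pathGF (fun r => IsBoundedMotzkin m (.F :: r)) (fun r => asc (.U :: .F :: r)) =
      PowerSeries.C Polynomial.X * FascBdd m := by
    rw [FascBdd_eq_pathGF, ← pathGF_add_one]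
    exact pathGF_congr (fun _ => isBoundedMotzkin_F_cons) fun r _ => by simp [asc_cons, add_comm]
  have hD : pathGF (fun r => IsBoundedMotzkin m (.D :: r)) (fun r => asc (.U :: .D :: r)) = 0 :=
    pathGF_eq_zero _ fun _ => not_isBoundedMotzkin_D_cons
  rw [FascBddLift, pathGF_eq_C_add_X_mul_sum, sum_univ_step, hU, hF, hD,
    if_pos isBoundedMotzkin_nil]
  simp [asc_cons, asc_nil, add_comm]

lemma FascBddUp_zero : FascBddUp 0 = 0 :=
  pathGF_eq_zero _ fun _ => not_isBoundedMotzkin_zero_U_cons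

lemma FascBddUp_succ (m : ℕ) :
    FascBddUp (m + 1) = PowerSeries.X * (FascBddLift m * FascBdd (m + 1)) := by
  ext n : 1
  cases n with
  | zero =>
    rw [PowerSeries.coeff_zero_X_mul, FascBddUp, coeff_pathGF, pathsOfLength_zero,
      Finset.sum_singleton, if_neg]
    simp [IsBoundedMotzkin, stepVal]
  | succ n =>
    rw [PowerSeries.coeff_succ_X_mul, FascBddLift, FascBdd_eq_pathGF, coeff_pathGF_mul, FascBddUp,
      coeff_pathGF, ← Finset.sum_filter]
    symm
    refine Finset.sum_nbij (fun x => x.2.1 ++ .D :: x.2.2) ?_ ?_ ?_ ?_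
    · rintro ⟨⟨a, b⟩, q, r⟩ hx
      simp only [Finset.mem_filter, Finset.mem_sigma, Finset.mem_product,
        Finset.HasAntidiagonal.mem_antidiagonal, mem_pathsOfLength] at hx ⊢
      obtain ⟨⟨hab, rfl, rfl⟩, hq, hr⟩ := hx
      refine ⟨by simp; omega, ?_⟩
      exact (isBoundedMotzkin_U_cons_append_D_cons_iff hq.isMotzkin).mpr ⟨hq, hr⟩
    · rintro ⟨⟨a, b⟩, q, r⟩ hx ⟨⟨a', b'⟩, q', r'⟩ hx' h
      simp only [Finset.mem_coe, Finset.mem_filter, Finset.mem_sigma, Finset.mem_product,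
        mem_pathsOfLength] at hx hx'
      obtain ⟨⟨-, rfl, rfl⟩, hq, -⟩ := hx
      obtain ⟨⟨-, rfl, rfl⟩, hq', -⟩ := hx'
      obtain ⟨rfl, rfl⟩ := eq_of_append_D_cons_eq hq.isMotzkin hq'.isMotzkin h
      rfl
    · intro p hp
      simp only [Finset.mem_coe, Finset.mem_filter, mem_pathsOfLength] at hp
      obtain ⟨hlen, hp⟩ := hp
      obtain ⟨q, r, hq, rfl⟩ := hp.isMotzkin.exists_eq_U_cons_append_D_cons
      obtain ⟨hqm, hr⟩ := (isBoundedMotzkin_U_cons_append_D_cons_iff hq).mp hp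
      refine ⟨⟨(q.length, r.length), q, r⟩, ?_, rfl⟩
      simp only [Finset.mem_coe, Finset.mem_filter, Finset.mem_sigma, Finset.mem_product,
        Finset.HasAntidiagonal.mem_antidiagonal, mem_pathsOfLength]
      refine ⟨?_, hqm, hr⟩
      simp at hlen ⊢
      omega
    · rintro ⟨⟨a, b⟩, q, r⟩ hx
      simp only [Finset.mem_filter] at hx
      rw [asc_U_cons_append_D_cons hx.2.1.isMotzkin]

lemma FascBdd_zero_mul : FascBdd 0 * (1 - PowerSeries.X) = 1 := by
  linear_combination FascBdd_eq 0 + PowerSeries.X * FascBddUp_zero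

lemma FascBdd_succ_mul (m : ℕ) :
    FascBdd (m + 1) * ((1 - PowerSeries.X - PowerSeries.X ^ 2
          * ((PowerSeries.C (R := Polynomial ℚ)) Polynomial.X - 1))
        - (PowerSeries.X ^ 2 + PowerSeries.X ^ 3
          * ((PowerSeries.C (R := Polynomial ℚ)) Polynomial.X - 1)) * FascBdd m) = 1 := by
  linear_combination FascBdd_eq (m + 1) + PowerSeries.X * FascBddUp_succ m
    + PowerSeries.X ^ 2 * FascBdd (m + 1) * FascBddLift_eq m
    - PowerSeries.X ^ 2 * FascBdd (m + 1) * FascBdd_eq m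

theorem bounded_ascents_eq_ratio_general (P : ℕ → PowerSeries (Polynomial ℚ))
    (hP0 : P 0 = 1) (hP1 : P 1 = 1 - PowerSeries.X)
    (hPrec : ∀ m, P (m + 2) =
      (1 - PowerSeries.X - PowerSeries.X ^ 2
          * ((PowerSeries.C (R := Polynomial ℚ)) Polynomial.X - 1)) * P (m + 1)
        - (PowerSeries.X ^ 2 + PowerSeries.X ^ 3
          * ((PowerSeries.C (R := Polynomial ℚ)) Polynomial.X - 1)) * P m)
    (m : ℕ) :
    FascBdd m * P (m + 1) = P m := by
  induction m with
  | zero => rw [hP0, hP1, FascBdd_zero_mul]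
  | succ k ih =>
    rw [hPrec]
    linear_combination P (k + 1) * FascBdd_succ_mul k
      + FascBdd (k + 1) * (PowerSeries.X ^ 2 + PowerSeries.X ^ 3
          * ((PowerSeries.C (R := Polynomial ℚ)) Polynomial.X - 1)) * ih

/-- With P₀ = 1, P₁ = 1 − x, P\_m = (1 − x − x²(t−1))P\_{m−1} − (x² + x³(t−1))P\_{m−2},
the ascent generating function for Motzkin paths of height at most m equals
P\_m / P\_{m+1}, i.e. F\_m · P\_{m+1} = P\_m. -/
theorem bounded_ascents_eq_ratio (P : ℕ → PowerSeries (Polynomial ℚ))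
    (hP0 : P 0 = 1) (hP1 : P 1 = 1 - PowerSeries.X)
    (hPrec : ∀ m, P (m + 2) =
      (1 - PowerSeries.X - PowerSeries.X ^ 2
          * ((PowerSeries.C (R := Polynomial ℚ)) Polynomial.X - 1)) * P (m + 1)
        - (PowerSeries.X ^ 2 + PowerSeries.X ^ 3
          * ((PowerSeries.C (R := Polynomial ℚ)) Polynomial.X - 1)) * P m)
    (m : ℕ) (hm : 1 ≤ m) :
    FascBdd m * P (m + 1) = P m :=
  bounded_ascents_eq_ratio_general P hP0 hP1 hPrec m
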